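/- arXiv:1904.00219 — 4 statements merged into one kernel-verified Lean document; each statement's English description precedes it below -/
import Mathlib

section
/- Let r ∈ ℚ_{>0} be such that S_r is atomic (i.e., r = 1 or n(r) > 1). Then ρ(S_r) < ∞ if and only if the k-th local elasticity ρ_k(S_r) = sup U_k(S_r) is finite for every k ∈ ℕ. -/
open Finsupp
open scoped ENNReal

/-- The Puiseux monoid (rational cyclic semiring) `S_r`, the additive submonoid of `ℚ`
generated by the nonnegative powers of `r`. -/
def S (r : ℚ) : AddSubmonoid ℚ := AddSubmonoid.closure {x : ℚ | ∃ n : ℕ, x = r ^ n}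

/-- A factorization of `x` over the powers of `r`: a finitely supported choice of
coefficients `α i` with `∑ α i * r ^ i = x`. -/
def IsFactorization (r x : ℚ) (α : ℕ →₀ ℕ) : Prop :=
  (α.sum fun i c => (c : ℚ) * r ^ i) = x

/-- The length of a factorization. -/
def flen (α : ℕ →₀ ℕ) : ℕ := α.sum fun _ c => c

/-- The set of lengths of factorizations of `x` over the powers of `r`. -/
def lengthSet (r x : ℚ) : Set ℕ :=
  {t | ∃ α : ℕ →₀ ℕ, IsFactorization r x α ∧ flen α = t}

/-- An atom of `S_r`: a nonzero element that is not the sum of two nonzero elements. -/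
def IsAtomS (r a : ℚ) : Prop :=
  a ∈ S r ∧ a ≠ 0 ∧ ¬ ∃ y z : ℚ, y ∈ S r ∧ z ∈ S r ∧ y ≠ 0 ∧ z ≠ 0 ∧ a = y + z

/-- The set of lengths of `x` as sums of atoms of `S_r`. -/
def atomLengthSet (r x : ℚ) : Set ℕ :=
  {t | ∃ f : Fin t → ℚ, (∀ i, IsAtomS r (f i)) ∧ ∑ i, f i = x}

open Classical in
/-- The elasticity of `x` in `S_r` (as an extended nonnegative real). -/
noncomputable def elast (r x : ℚ) : ℝ≥0∞ :=
  if x = 0 then 1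
  else if BddAbove (atomLengthSet r x) then
    (↑(sSup (atomLengthSet r x)) : ℝ≥0∞) / (↑(sInf (atomLengthSet r x)) : ℝ≥0∞)
  else ⊤

/-- The elasticity of the monoid `S_r`. -/
noncomputable def elastM (r : ℚ) : ℝ≥0∞ := ⨆ x ∈ S r, elast r x

/-- The union of the sets of lengths (over atoms) of elements of `S_r` containing `k`. -/
def Uk (r : ℚ) (k : ℕ) : Set ℕ :=
  {l | ∃ x ∈ S r, x ≠ 0 ∧ k ∈ atomLengthSet r x ∧ l ∈ atomLengthSet r x}

/-!
If `r.den = 1` then `r` is a natural number, `S_r ⊆ ℕ` and its only atom is `1`, so every element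
has a single length. Otherwise `r.num > 1` as well, and every power `r ^ m` is an atom: a
decomposition of `r ^ m` involves only powers smaller than `r ^ m`, so `r ^ m = r ^ m * q * w` for
some `w ∈ S_q`, where `q = r` if `r < 1` and `q = r⁻¹` if `r > 1`. This is impossible, since
denominators of elements of `S_q` divide powers of `q.den`, while `(q⁻¹).den = q.num > 1` is coprime
to `q.den`. Trading atoms along `r.den * r ^ (j + 1) = r.num * r ^ j` then shows that an element with
a factorization of length `r.den` has others of every length `r.den + s * |r.den - r.num|`, so both
`ρ(S_r)` and `ρ_{r.den}(S_r)` are infinite.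
-/

namespace AddSubmonoid

variable {M : Type*} [AddCommMonoid M] [PartialOrder M] [IsOrderedAddMonoid M] {G : Set M}

theorem nonneg_of_mem_closure (hG : ∀ g ∈ G, 0 ≤ g) {x : M}
    (hx : x ∈ closure G) : 0 ≤ x := by
  induction hx using closure_induction with
  | mem g hg => exact hG g hg
  | zero => exact le_rfl
  | add _ _ _ _ hx hy => exact add_nonneg hx hy

theorem mem_closure_sep_le (hG : ∀ g ∈ G, 0 ≤ g) {x : M}
    (hx : x ∈ closure G) : x ∈ closure {g ∈ G | g ≤ x} := by
  induction hx using closure_induction with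
  | mem g hg => exact subset_closure ⟨hg, le_rfl⟩
  | zero => exact zero_mem _
  | add x y hx hy ihx ihy =>
    refine add_mem (closure_mono ?_ ihx) (closure_mono ?_ ihy)
    · exact fun g ⟨hg, hgx⟩ =>
        ⟨hg, hgx.trans (le_add_of_nonneg_right (nonneg_of_mem_closure hG hy))⟩
    · exact fun g ⟨hg, hgy⟩ =>
        ⟨hg, hgy.trans (le_add_of_nonneg_left (nonneg_of_mem_closure hG hx))⟩

theorem mem_closure_sep_lt (hG : ∀ g ∈ G, 0 ≤ g) {x b : M}
    (hx : x ∈ closure G) (hxb : x < b) :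
    x ∈ closure {g ∈ G | g < b} := by
  refine closure_mono ?_ (mem_closure_sep_le hG hx)
  exact fun _ hg => ⟨hg.1, hg.2.trans_lt hxb⟩

end AddSubmonoid

theorem pow_mem_S (r : ℚ) (n : ℕ) : r ^ n ∈ S r :=
  AddSubmonoid.subset_closure ⟨n, rfl⟩

theorem natCast_mem_S (r : ℚ) (m : ℕ) : (m : ℚ) ∈ S r := by
  simpa using AddSubmonoid.nsmul_mem (S r) (pow_mem_S r 0) m

theorem exists_den_dvd_den_pow_of_mem_S {r x : ℚ} (hx : x ∈ S r) : ∃ K, x.den ∣ r.den ^ K := by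
  induction hx using AddSubmonoid.closure_induction with
  | mem _ h =>
    obtain ⟨n, rfl⟩ := h
    exact ⟨n, (Rat.den_pow r n).dvd⟩
  | zero => exact ⟨0, by simp⟩
  | add x y _ _ ihx ihy =>
    obtain ⟨K, hK⟩ := ihx
    obtain ⟨L, hL⟩ := ihy
    exact ⟨K + L, (Rat.add_den_dvd x y).trans (pow_add r.den K L ▸ mul_dvd_mul hK hL)⟩

theorem mul_ne_one_of_mem_S {q w : ℚ} (hq : 1 < q.num) (hw : w ∈ S q) : q * w ≠ 1 := by
  intro h
  obtain ⟨K, hK⟩ := exists_den_dvd_den_pow_of_mem_S hw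
  rw [← inv_eq_of_mul_eq_one_right h, Rat.den_inv_of_ne_zero (by rintro rfl; simp at hq)] at hK
  have := Nat.Coprime.eq_one_of_dvd (q.reduced.pow_right K) hK
  omega

theorem exists_closure_pow_lt_le_map_mulLeft {r : ℚ} (hn : 1 < r.num) (hd : 1 < r.den) (m : ℕ) :
    ∃ q : ℚ, 1 < q.num ∧
      AddSubmonoid.closure {g ∈ {x : ℚ | ∃ n : ℕ, x = r ^ n} | g < r ^ m}
        ≤ (S q).map (AddMonoidHom.mulLeft (r ^ m * q)) := by
  have hr : 0 < r := Rat.num_pos.mp (by omega)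
  rcases (show r ≠ 1 by rintro rfl; simp at hd).lt_or_gt with hlt | hgt
  · refine ⟨r, hn, AddSubmonoid.closure_le.mpr ?_⟩
    rintro _ ⟨⟨n, rfl⟩, hnm⟩
    obtain ⟨k, rfl⟩ := Nat.exists_eq_add_of_lt ((pow_lt_pow_iff_right_of_lt_one₀ hr hlt).mp hnm)
    exact ⟨r ^ k, pow_mem_S r k, by simp only [AddMonoidHom.coe_mulLeft]; ring⟩
  · refine ⟨r⁻¹, ?_, AddSubmonoid.closure_le.mpr ?_⟩
    · rw [Rat.num_inv, Int.sign_eq_one_of_pos (by omega)]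
      simpa using hd
    rintro _ ⟨⟨n, rfl⟩, hnm⟩
    obtain ⟨k, rfl⟩ := Nat.exists_eq_add_of_lt ((pow_lt_pow_iff_right₀ hgt).mp hnm)
    refine ⟨r⁻¹ ^ k, pow_mem_S r⁻¹ k, ?_⟩
    simp only [AddMonoidHom.coe_mulLeft, inv_pow]
    field_simp
    ring

theorem isAtomS_pow {r : ℚ} (hn : 1 < r.num) (hd : 1 < r.den) (m : ℕ) : IsAtomS r (r ^ m) := by
  have hr : 0 < r := Rat.num_pos.mp (by omega)
  have hG : ∀ g ∈ {x : ℚ | ∃ n : ℕ, x = r ^ n}, 0 ≤ g := by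
    rintro _ ⟨n, rfl⟩
    positivity
  refine ⟨pow_mem_S r m, (pow_pos hr m).ne', ?_⟩
  rintro ⟨y, z, hy, hz, hy0, hz0, hyz⟩
  have hy_pos := (AddSubmonoid.nonneg_of_mem_closure hG hy).lt_of_ne' hy0
  have hz_pos := (AddSubmonoid.nonneg_of_mem_closure hG hz).lt_of_ne' hz0
  have hsum : r ^ m ∈ AddSubmonoid.closure {g ∈ {x : ℚ | ∃ n : ℕ, x = r ^ n} | g < r ^ m} :=
    hyz ▸ add_mem (AddSubmonoid.mem_closure_sep_lt hG hy (by linarith))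
      (AddSubmonoid.mem_closure_sep_lt hG hz (by linarith))
  obtain ⟨q, hq, hle⟩ := exists_closure_pow_lt_le_map_mulLeft hn hd m
  obtain ⟨w, hw, hmw⟩ := hle hsum
  refine mul_ne_one_of_mem_S hq hw (mul_left_cancel₀ (pow_ne_zero m hr.ne') ?_)
  simp only [AddMonoidHom.coe_mulLeft] at hmw
  linear_combination hmw

theorem add_mem_atomLengthSet {r x y : ℚ} {a b : ℕ} (ha : a ∈ atomLengthSet r x)
    (hb : b ∈ atomLengthSet r y) : a + b ∈ atomLengthSet r (x + y) := by
  obtain ⟨f, hf, rfl⟩ := ha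
  obtain ⟨g, hg, rfl⟩ := hb
  refine ⟨Fin.append f g, fun i => ?_, by simp [Fin.sum_univ_add]⟩
  induction i using Fin.addCases <;> simp [hf, hg]

theorem natCast_mul_mem_atomLengthSet {r a : ℚ} (ha : IsAtomS r a) (t : ℕ) :
    t ∈ atomLengthSet r (t * a) :=
  ⟨fun _ => a, fun _ => ha, by simp⟩

section Chains

variable {r : ℚ} {a b : ℕ}

theorem add_mul_sub_mem_atomLengthSet_of_lt (hatom : ∀ j, IsAtomS r (r ^ j))
    (hab : (a : ℚ) * r = b) (hba : b < a) (s j : ℕ) :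
    a + s * (a - b) ∈ atomLengthSet r (a * r ^ j) := by
  induction s generalizing j with
  | zero => simpa using natCast_mul_mem_atomLengthSet (hatom j) a
  | succ s ih =>
    have hsplit : (a : ℚ) * r ^ j = ((a - b : ℕ) : ℚ) * r ^ j + a * r ^ (j + 1) := by
      rw [Nat.cast_sub hba.le, pow_succ]
      linear_combination (-(r ^ j)) * hab
    rw [hsplit]
    convert add_mem_atomLengthSet (natCast_mul_mem_atomLengthSet (hatom j) (a - b)) (ih (j + 1))
      using 1
    ring

theorem add_mul_sub_mem_atomLengthSet_of_gt (hatom : ∀ j, IsAtomS r (r ^ j))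
    (hab : (a : ℚ) * r = b) (hab' : a < b) (s : ℕ) :
    a + s * (b - a) ∈ atomLengthSet r (a * r ^ s) := by
  induction s with
  | zero => simpa using natCast_mul_mem_atomLengthSet (hatom 0) a
  | succ s ih =>
    have hsplit : (a : ℚ) * r ^ (s + 1) = ((b - a : ℕ) : ℚ) * r ^ s + a * r ^ s := by
      rw [Nat.cast_sub hab'.le, pow_succ]
      linear_combination (r ^ s) * hab
    rw [hsplit]
    convert add_mem_atomLengthSet (natCast_mul_mem_atomLengthSet (hatom s) (b - a)) ih using 1
    ring

end Chains

theorem exists_mem_atomLengthSet_le {r : ℚ} (hn : 1 < r.num) (hd : 1 < r.den) (n : ℕ) :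
    ∃ x ∈ S r, x ≠ 0 ∧ r.den ∈ atomLengthSet r x ∧ ∃ l ∈ atomLengthSet r x, n ≤ l := by
  have hatom := isAtomS_pow hn hd
  have hr : 0 < r := Rat.num_pos.mp (by omega)
  have hmem (j : ℕ) : (r.den : ℚ) * r ^ j ∈ S r := by
    simpa using AddSubmonoid.nsmul_mem (S r) (pow_mem_S r j) r.den
  have hne (j : ℕ) : (r.den : ℚ) * r ^ j ≠ 0 := by positivity
  have hdN : (r.den : ℚ) * r = r.num.natAbs := by
    rw [Rat.den_mul_eq_num, Nat.cast_natAbs, abs_of_pos (show 0 < r.num by omega)]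
  have hNd : r.num.natAbs ≠ r.den := fun h => by
    have := Nat.Coprime.eq_one_of_dvd r.reduced (h ▸ dvd_rfl)
    omega
  rcases hNd.lt_or_gt with hlt | hgt
  · refine ⟨_, hmem 0, hne 0, by simpa using natCast_mul_mem_atomLengthSet (hatom 0) r.den, _,
      add_mul_sub_mem_atomLengthSet_of_lt hatom hdN hlt n 0,
      le_add_left (Nat.le_mul_of_pos_right n (by omega))⟩
  · refine ⟨_, hmem n, hne n, natCast_mul_mem_atomLengthSet (hatom n) r.den, _,
      add_mul_sub_mem_atomLengthSet_of_gt hatom hdN hgt n,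
      le_add_left (Nat.le_mul_of_pos_right n (by omega))⟩

theorem div_le_elast {r x : ℚ} {a b : ℕ} (hx : x ≠ 0) (ha : a ∈ atomLengthSet r x)
    (hb : b ∈ atomLengthSet r x) : (b : ℝ≥0∞) / a ≤ elast r x := by
  rw [elast, if_neg hx]
  split_ifs with hB
  · exact ENNReal.div_le_div (by exact_mod_cast le_csSup hB hb) (by exact_mod_cast Nat.sInf_le ha)
  · exact le_top

theorem elast_le_elastM {r x : ℚ} (hx : x ∈ S r) : elast r x ≤ elastM r :=
  le_iSup₂ (f := fun x (_ : x ∈ S r) => elast r x) x hx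

theorem elast_le_one_of_subsingleton {r x : ℚ} (h : (atomLengthSet r x).Subsingleton) :
    elast r x ≤ 1 := by
  unfold elast
  split_ifs with hx hB
  · exact le_rfl
  · rcases h.eq_empty_or_singleton with he | ⟨t, ht⟩ <;> simp [*]
  · exact absurd h.finite.bddAbove hB

theorem elastM_eq_top {r : ℚ} (hn : 1 < r.num) (hd : 1 < r.den) : elastM r = ⊤ := by
  refine ENNReal.eq_top_of_forall_nnreal_le fun c => ?_
  obtain ⟨n, hn'⟩ := exists_nat_ge (c * r.den)
  obtain ⟨x, hxS, hx0, hdx, l, hl, hnl⟩ := exists_mem_atomLengthSet_le hn hd n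
  calc (c : ℝ≥0∞) ≤ l / r.den := by
        rw [ENNReal.le_div_iff_mul_le (by simp) (by simp)]
        exact_mod_cast hn'.trans (by exact_mod_cast hnl)
    _ ≤ elast r x := div_le_elast hx0 hdx hl
    _ ≤ elastM r := elast_le_elastM hxS

theorem iSup_Uk_den_eq_top {r : ℚ} (hn : 1 < r.num) (hd : 1 < r.den) :
    ⨆ l ∈ Uk r r.den, (l : ℕ∞) = ⊤ := by
  refine (iSup₂_eq_top _).mpr fun b hb => ?_
  lift b to ℕ using hb.ne
  obtain ⟨x, hxS, hx0, hdx, l, hl, hbl⟩ := exists_mem_atomLengthSet_le hn hd (b + 1)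
  exact ⟨l, ⟨x, hxS, hx0, hdx, hl⟩, by exact_mod_cast hbl⟩

theorem exists_natCast_eq_of_mem_S {N : ℕ} {x : ℚ} (hx : x ∈ S N) : ∃ m : ℕ, x = m := by
  induction hx using AddSubmonoid.closure_induction with
  | mem _ h =>
    obtain ⟨n, rfl⟩ := h
    exact ⟨N ^ n, by push_cast; rfl⟩
  | zero => exact ⟨0, by simp⟩
  | add _ _ _ _ ihx ihy =>
    obtain ⟨a, rfl⟩ := ihx
    obtain ⟨b, rfl⟩ := ihy
    exact ⟨a + b, by push_cast; rfl⟩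

theorem eq_one_of_isAtomS_natCast {N : ℕ} {a : ℚ} (ha : IsAtomS N a) : a = 1 := by
  obtain ⟨haS, ha0, hirr⟩ := ha
  obtain ⟨m, rfl⟩ := exists_natCast_eq_of_mem_S haS
  obtain rfl | rfl | ⟨k, rfl⟩ : m = 0 ∨ m = 1 ∨ ∃ k, m = k + 2 := by
    rcases m with _ | _ | k <;> simp
  · simp at ha0
  · simp
  · exact absurd ⟨1, (k + 1 : ℕ), by simpa using natCast_mem_S N 1, natCast_mem_S N (k + 1),
      one_ne_zero, by positivity, by push_cast; ring⟩ hirr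

theorem atomLengthSet_natCast_subsingleton (N : ℕ) (x : ℚ) :
    (atomLengthSet N x).Subsingleton := by
  have hlen : ∀ t ∈ atomLengthSet N x, (t : ℚ) = x := by
    rintro t ⟨f, hf, rfl⟩
    simp [fun i => eq_one_of_isAtomS_natCast (hf i)]
  exact fun s hs t ht => by exact_mod_cast (hlen s hs).trans (hlen t ht).symm

theorem elastM_natCast_le_one (N : ℕ) : elastM N ≤ 1 :=
  iSup₂_le fun x _ => elast_le_one_of_subsingleton (atomLengthSet_natCast_subsingleton N x)

theorem iSup_Uk_natCast_le (N k : ℕ) : ⨆ l ∈ Uk N k, (l : ℕ∞) ≤ k :=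
  iSup₂_le fun _ ⟨x, _, _, hk, hl⟩ => by
    rw [atomLengthSet_natCast_subsingleton N x hl hk]

theorem stmt12_general (r : ℚ) (hat : r = 1 ∨ 1 < r.num) :
    elastM r < ⊤ ↔ ∀ k : ℕ, 0 < k → (⨆ l ∈ Uk r k, (l : ℕ∞)) < ⊤ := by
  obtain ⟨N, rfl⟩ | ⟨hn, hd⟩ : (∃ N : ℕ, r = N) ∨ (1 < r.num ∧ 1 < r.den) := by
    rcases hat with rfl | hn
    · exact Or.inl ⟨1, by simp⟩
    rcases (Nat.one_le_iff_ne_zero.mpr r.den_nz).eq_or_lt with hd | hd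
    · refine Or.inl ⟨r.num.toNat, ?_⟩
      conv_lhs => rw [← (Rat.den_eq_one_iff r).mp hd.symm]
      exact_mod_cast (Int.toNat_of_nonneg (show 0 ≤ r.num by omega)).symm
    · exact Or.inr ⟨hn, hd⟩
  · exact iff_of_true ((elastM_natCast_le_one N).trans_lt ENNReal.one_lt_top)
      fun k _ => (iSup_Uk_natCast_le N k).trans_lt (ENat.natCast_lt_top k)
  · refine iff_of_false (by simp [elastM_eq_top hn hd]) fun h => ?_
    simpa [iSup_Uk_den_eq_top hn hd] using h r.den (by omega)

theorem stmt12 (r : ℚ) (h0 : 0 < r) (hat : r = 1 ∨ 1 < r.num) :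
    elastM r < ⊤ ↔ ∀ k : ℕ, 0 < k → (⨆ l ∈ Uk r k, (l : ℕ∞)) < ⊤ :=
  stmt12_general r hat
end

section
/- Let r ∈ ℚ_{>1} \ ℕ (so n(r) > d(r) > 1 and S_r is atomic), let x ∈ S_r be nonzero, and let α be a factorization of x. Then |α| = min L(x) if and only if α_i < n(r) for every i ∈ ℕ₀. Moreover, x has exactly one factorization of minimum length. -/
/-!
Since `r = N / D`, the carry `N • r ^ i = D • r ^ (i + 1)` shortens a factorization by `N - D > 0`,
so a factorization of minimum length has every coefficient below `N`, and carrying any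
factorization until this holds produces such a one. Factorizations with all coefficients below `N`
are unique: multiplying `∑ α i * r ^ i` by `D ^ M` gives the natural number
`∑ α i * N ^ i * D ^ (M - i)`, which is `α 0 * D ^ M` modulo `N`, and `D` is a unit modulo `N`, so
the coefficients can be read off one at a time.
-/

open Finsupp
open scoped ENNReal

open Finset

def evalPow (r : ℚ) (α : ℕ →₀ ℕ) : ℚ := α.sum fun i c => (c : ℚ) * r ^ i

lemma isFactorization_iff {r x : ℚ} {α : ℕ →₀ ℕ} : IsFactorization r x α ↔ evalPow r α = x :=
  Iff.rfl

lemma evalPow_add (r : ℚ) (α β : ℕ →₀ ℕ) : evalPow r (α + β) = evalPow r α + evalPow r β :=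
  Finsupp.sum_add_index' (fun _ => by simp) fun _ _ _ => by push_cast; ring

lemma evalPow_single (r : ℚ) (i c : ℕ) : evalPow r (Finsupp.single i c) = c * r ^ i :=
  Finsupp.sum_single_index (by simp)

lemma flen_add (α β : ℕ →₀ ℕ) : flen (α + β) = flen α + flen β :=
  Finsupp.sum_add_index' (fun _ => rfl) fun _ _ _ => rfl

lemma flen_single (i c : ℕ) : flen (Finsupp.single i c) = c :=
  Finsupp.sum_single_index rfl

lemma sum_range_succ_mul_pow_mul_pow (f : ℕ → ℕ) (N D M : ℕ) :
    ∑ i ∈ range (M + 1), f i * N ^ i * D ^ (M + 1 - i) =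
      f 0 * D ^ (M + 1) + N * ∑ i ∈ range M, f (i + 1) * N ^ i * D ^ (M - i) := by
  rw [sum_range_succ', Finset.mul_sum, add_comm]
  simp only [pow_zero, mul_one, Nat.sub_zero, Nat.add_sub_add_right]
  congr 1
  exact sum_congr rfl fun i _ => by ring

theorem eq_of_sum_mul_pow_mul_pow_eq {N D : ℕ} (hcop : D.Coprime N) {M : ℕ} {f g : ℕ → ℕ}
    (hf : ∀ i, f i < N) (hg : ∀ i, g i < N)
    (h : ∑ i ∈ range M, f i * N ^ i * D ^ (M - i) = ∑ i ∈ range M, g i * N ^ i * D ^ (M - i)) :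
    ∀ i < M, f i = g i := by
  induction M generalizing f g with
  | zero => simp
  | succ M ih =>
    rw [sum_range_succ_mul_pow_mul_pow, sum_range_succ_mul_pow_mul_pow] at h
    have hmod : f 0 * D ^ (M + 1) ≡ g 0 * D ^ (M + 1) [MOD N] := by
      simpa [Nat.ModEq, Nat.add_mul_mod_self_left] using congrArg (· % N) h
    have h0 : f 0 = g 0 :=
      (hmod.cancel_right_of_coprime (hcop.pow_left _).symm).eq_of_lt_of_lt (hf 0) (hg 0)
    have htail := ih (fun i => hf (i + 1)) (fun i => hg (i + 1))
      (Nat.eq_of_mul_eq_mul_left (Nat.zero_lt_of_lt (hf 0))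
        (by rw [h0] at h; exact Nat.add_left_cancel h))
    rintro (_ | i) hi
    · exact h0
    · exact htail i (by omega)

section Carry

variable {r : ℚ} {N D : ℕ}

lemma evalPow_single_succ (hND : (N : ℚ) = r * D) (j : ℕ) :
    evalPow r (Finsupp.single (j + 1) D) = evalPow r (Finsupp.single j N) := by
  rw [evalPow_single, evalPow_single, hND]
  ring

lemma evalPow_mul_pow_eq_sum (hND : (N : ℚ) = r * D) {α : ℕ →₀ ℕ} {M : ℕ}
    (hM : α.support ⊆ range M) :
    evalPow r α * D ^ M = ((∑ i ∈ range M, α i * N ^ i * D ^ (M - i) : ℕ) : ℚ) := by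
  rw [evalPow, Finsupp.sum_of_support_subset α hM _ (by simp), Finset.sum_mul]
  push_cast
  refine sum_congr rfl fun i hi => ?_
  rw [← Nat.add_sub_cancel' (mem_range.1 hi).le, pow_add, Nat.add_sub_cancel_left, hND]
  ring

lemma exists_isFactorization_flen_add (hND : (N : ℚ) = r * D) {x : ℚ} {α : ℕ →₀ ℕ}
    (hα : IsFactorization r x α) {j : ℕ} (hj : N ≤ α j) :
    ∃ α', IsFactorization r x α' ∧ flen α' + N = flen α + D := by
  obtain ⟨β, rfl⟩ := le_iff_exists_add.1 (Finsupp.single_le_iff.2 hj)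
  refine ⟨Finsupp.single (j + 1) D + β, ?_, ?_⟩
  · rw [isFactorization_iff, evalPow_add, evalPow_single_succ hND, ← evalPow_add]
    exact hα
  · rw [flen_add, flen_add, flen_single, flen_single]
    ring

lemma exists_isFactorization_lt_flen_le (hND : (N : ℚ) = r * D) (hDN : D < N) {x : ℚ}
    {α : ℕ →₀ ℕ} (hα : IsFactorization r x α) :
    ∃ β, IsFactorization r x β ∧ (∀ i, β i < N) ∧ flen β ≤ flen α := by
  induction hlen : flen α using Nat.strong_induction_on generalizing α with
  | _ n ih =>
    by_cases hlt : ∀ i, α i < N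
    · exact ⟨α, hα, hlt, hlen.le⟩
    · obtain ⟨j, hj⟩ := not_forall.1 hlt
      obtain ⟨α', hα', hlen'⟩ := exists_isFactorization_flen_add hND hα (not_lt.1 hj)
      obtain ⟨β, hβ, hβlt, hβle⟩ := ih (flen α') (by omega) hα' rfl
      exact ⟨β, hβ, hβlt, by omega⟩

lemma eq_of_isFactorization_of_lt (hND : (N : ℚ) = r * D) (hcop : D.Coprime N) {x : ℚ}
    {α β : ℕ →₀ ℕ} (hα : IsFactorization r x α) (hβ : IsFactorization r x β)
    (hαN : ∀ i, α i < N) (hβN : ∀ i, β i < N) : α = β := by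
  obtain ⟨M, hM⟩ := exists_nat_subset_range (α.support ∪ β.support)
  have hsum := evalPow_mul_pow_eq_sum hND (union_subset_left hM)
  rw [isFactorization_iff.1 hα, ← isFactorization_iff.1 hβ,
    evalPow_mul_pow_eq_sum hND (union_subset_right hM), Nat.cast_inj] at hsum
  ext i
  by_cases hi : i < M
  · exact eq_of_sum_mul_pow_mul_pow_eq hcop hαN hβN hsum.symm i hi
  · have hi' : i ∉ α.support ∪ β.support := fun h => hi (mem_range.1 (hM h))
    simp only [mem_union, Finsupp.mem_support_iff, not_or, not_not] at hi'
    rw [hi'.1, hi'.2]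

lemma isLeast_lengthSet (hND : (N : ℚ) = r * D) (hDN : D < N) (hcop : D.Coprime N) {x : ℚ}
    {α : ℕ →₀ ℕ} (hα : IsFactorization r x α) (hαN : ∀ i, α i < N) :
    IsLeast (lengthSet r x) (flen α) := by
  refine ⟨⟨α, hα, rfl⟩, ?_⟩
  rintro _ ⟨β, hβ, rfl⟩
  obtain ⟨γ, hγ, hγN, hγβ⟩ := exists_isFactorization_lt_flen_le hND hDN hβ
  rwa [eq_of_isFactorization_of_lt hND hcop hα hγ hαN hγN]

theorem flen_eq_sInf_lengthSet_iff (hND : (N : ℚ) = r * D) (hDN : D < N)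
    (hcop : D.Coprime N) {x : ℚ} {α : ℕ →₀ ℕ} (hα : IsFactorization r x α) :
    flen α = sInf (lengthSet r x) ↔ ∀ i, α i < N := by
  refine ⟨fun hmin j => ?_, fun hαN => (isLeast_lengthSet hND hDN hcop hα hαN).csInf_eq.symm⟩
  by_contra! hj
  obtain ⟨α', hα', hlen⟩ := exists_isFactorization_flen_add hND hα hj
  have : sInf (lengthSet r x) ≤ flen α' := Nat.sInf_le ⟨α', hα', rfl⟩
  omega

end Carry

section RatFacts

variable {r : ℚ}

lemma Rat.num_toNat_eq_mul_den (hr : 0 ≤ r) : (r.num.toNat : ℚ) = r * r.den := by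
  rw [Rat.mul_den_eq_num, ← Int.toNat_of_nonneg (Rat.num_nonneg.2 hr)]
  rfl

lemma Rat.den_lt_num_toNat (hr : 1 < r) : r.den < r.num.toNat := by
  have hden : (0 : ℚ) < r.den := by exact_mod_cast r.pos
  have : (r.den : ℚ) < r.num.toNat := by
    rw [Rat.num_toNat_eq_mul_den (by linarith)]
    nlinarith
  exact_mod_cast this

lemma Rat.den_coprime_num_toNat (hr : 0 ≤ r) : r.den.Coprime r.num.toNat := by
  have : r.num.toNat = r.num.natAbs := by
    have := Rat.num_nonneg.2 hr
    omega
  exact this ▸ r.reduced.symm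

end RatFacts

theorem stmt15_general (r : ℚ) (h1 : 1 < r)
    (x : ℚ)
    (α : ℕ →₀ ℕ) (hα : IsFactorization r x α) :
    (flen α = sInf (lengthSet r x) ↔ ∀ i : ℕ, α i < r.num.toNat) ∧
    ∃! β : ℕ →₀ ℕ, IsFactorization r x β ∧ flen β = sInf (lengthSet r x) := by
  have hr : 0 ≤ r := by linarith
  have hND := Rat.num_toNat_eq_mul_den hr
  have hDN := Rat.den_lt_num_toNat h1
  have hcop := Rat.den_coprime_num_toNat hr
  have hmin : ∀ β, IsFactorization r x β →
      (flen β = sInf (lengthSet r x) ↔ ∀ i, β i < r.num.toNat) :=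
    fun β hβ => flen_eq_sInf_lengthSet_iff hND hDN hcop hβ
  obtain ⟨γ, hγ, hγN, -⟩ := exists_isFactorization_lt_flen_le hND hDN hα
  refine ⟨hmin α hα, γ, ⟨hγ, (hmin γ hγ).2 hγN⟩, ?_⟩
  rintro β ⟨hβ, hβlen⟩
  exact eq_of_isFactorization_of_lt hND hcop hβ hγ ((hmin β hβ).1 hβlen) hγN

theorem stmt15 (r : ℚ) (h1 : 1 < r) (hd : r.den ≠ 1)
    (x : ℚ) (hx : x ∈ S r) (hx0 : x ≠ 0)
    (α : ℕ →₀ ℕ) (hα : IsFactorization r x α) :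
    (flen α = sInf (lengthSet r x) ↔ ∀ i : ℕ, α i < r.num.toNat) ∧
    ∃! β : ℕ →₀ ℕ, IsFactorization r x β ∧ flen β = sInf (lengthSet r x) :=
  stmt15_general r h1 x α hα
end

section
/- Let r ∈ ℚ_{>1} \ ℕ (so n(r) > d(r) > 1 and S_r is atomic), let x ∈ S_r be nonzero, and let α be a factorization of x. Then L(x) is finite, and |α| = max L(x) if and only if α_i < d(r) for every i ≥ 1. Moreover, x has exactly one factorization of maximum length. -/
open Finsupp
open scoped ENNReal

/-!
A factorization of maximum length exists since every atom `r ^ i` is at least `1`, so lengths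
are bounded by `x`. Because `d * r ^ (i + 1) = n * r ^ i` (with `r = n / d`), any factorization
with a coefficient `α (i + 1) ≥ d` can be lengthened by trading `d` copies of `r ^ (i + 1)` for
`n > d` copies of `r ^ i`; so a longest factorization has all coefficients `α i < d` for `i ≥ 1`.
Conversely there is at most one such factorization: the difference of two of them is an integer
polynomial vanishing at `r`, so by the rational root theorem `d` divides its leading coefficient,
which is impossible for a nonzero difference of two numbers in `[0, d)` (and a nonzero constant
has no root).
-/

open Polynomial

theorem Rat.natAbs_num_eq_mul_den {r : ℚ} (hr : 0 ≤ r) : (r.num.natAbs : ℚ) = r * r.den := by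
  have hnum : (0 : ℚ) ≤ r.num := by exact_mod_cast Rat.num_nonneg.mpr hr
  rw [Nat.cast_natAbs, Int.cast_abs, Rat.mul_den_eq_num, abs_of_nonneg hnum]

theorem Rat.den_lt_natAbs_num {r : ℚ} (hr : 1 < r) : r.den < r.num.natAbs := by
  have hden : (0 : ℚ) < r.den := by exact_mod_cast r.pos
  have : (r.den : ℚ) < r.num.natAbs := by
    rw [Rat.natAbs_num_eq_mul_den (by linarith)]
    nlinarith
  exact_mod_cast this

theorem Rat.den_dvd_leadingCoeff_of_aeval_eq_zero {p : ℤ[X]} {r : ℚ} (hr : aeval r p = 0) :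
    (r.den : ℤ) ∣ p.leadingCoeff := by
  rw [← Rat.isFractionRingDen, Int.natAbs_dvd]
  exact den_dvd_of_is_root hr

noncomputable def toIntPoly : (ℕ →₀ ℕ) →+ ℤ[X] :=
  Finsupp.liftAddHom fun i => (monomial i).toAddMonoidHom.comp (Nat.castAddMonoidHom ℤ)

@[simp]
theorem toIntPoly_single (i c : ℕ) : toIntPoly (single i c) = monomial i (c : ℤ) :=
  Finsupp.liftAddHom_apply_single _ _ _

@[simp]
theorem coeff_toIntPoly (α : ℕ →₀ ℕ) (i : ℕ) : (toIntPoly α).coeff i = α i := by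
  induction α using Finsupp.induction_linear with
  | zero => simp
  | add α β hα hβ => simp [hα, hβ]
  | single j c => by_cases h : j = i <;> simp [h, coeff_monomial]

theorem toIntPoly_injective : Function.Injective toIntPoly := fun α β h =>
  Finsupp.ext fun i => by simpa using congrArg (coeff · i) h

theorem isFactorization_iff_aeval {r x : ℚ} {α : ℕ →₀ ℕ} :
    IsFactorization r x α ↔ aeval r (toIntPoly α) = x := by
  conv_rhs => rw [← Finsupp.sum_single α, map_finsuppSum, map_finsuppSum]
  simp [IsFactorization, aeval_monomial]

theorem flen_eq_degree (α : ℕ →₀ ℕ) : flen α = α.degree := rfl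

theorem flen_le_of_isFactorization {r x : ℚ} (hr : 1 ≤ r) {α : ℕ →₀ ℕ}
    (hα : IsFactorization r x α) : (flen α : ℚ) ≤ x := by
  rw [← hα, flen, Finsupp.sum, Finsupp.sum, Nat.cast_sum]
  exact Finset.sum_le_sum fun i _ => le_mul_of_one_le_right (Nat.cast_nonneg _) (one_le_pow₀ hr)

theorem lengthSet_finite {r : ℚ} (hr : 1 ≤ r) (x : ℚ) : (lengthSet r x).Finite :=
  (Set.finite_Iic ⌊x⌋₊).subset fun _ ⟨_, hα, hlen⟩ =>
    Nat.le_floor (hlen ▸ flen_le_of_isFactorization hr hα)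

theorem flen_sub_single_add_single {α : ℕ →₀ ℕ} {j a : ℕ} (h : a ≤ α j) (i b : ℕ) :
    flen (α - single j a + single i b) + a = flen α + b := by
  conv_rhs => rw [← tsub_add_cancel_of_le (Finsupp.single_le_iff.mpr h)]
  simp only [flen_eq_degree, map_add, Finsupp.degree_single]
  ring

theorem IsFactorization.carry {r x : ℚ} (hr : 0 ≤ r) {α : ℕ →₀ ℕ} (hα : IsFactorization r x α)
    {i : ℕ} (h : r.den ≤ α (i + 1)) :
    IsFactorization r x (α - single (i + 1) r.den + single i r.num.natAbs) := by
  rw [isFactorization_iff_aeval] at hα ⊢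
  rw [← tsub_add_cancel_of_le (Finsupp.single_le_iff.mpr h)] at hα
  simp only [map_add, toIntPoly_single, aeval_monomial, eq_intCast, Int.cast_natCast] at hα ⊢
  rw [← hα, Rat.natAbs_num_eq_mul_den hr]
  ring

theorem IsFactorization.eq_of_forall_lt_den {r x : ℚ} {α β : ℕ →₀ ℕ}
    (hα : IsFactorization r x α) (hβ : IsFactorization r x β)
    (hα_lt : ∀ i, 1 ≤ i → α i < r.den) (hβ_lt : ∀ i, 1 ≤ i → β i < r.den) : α = β := by
  by_contra hne
  set p := toIntPoly α - toIntPoly β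
  have hp : p.leadingCoeff ≠ 0 :=
    leadingCoeff_ne_zero.mpr (sub_ne_zero.mpr (toIntPoly_injective.ne hne))
  have hroot : aeval r p = 0 := by
    rw [isFactorization_iff_aeval] at hα hβ
    simp [p, hα, hβ]
  rcases Nat.eq_zero_or_pos p.natDegree with hdeg | hdeg
  · rw [eq_C_of_natDegree_eq_zero hdeg, aeval_C, ← hdeg] at hroot
    exact hp (by simpa using hroot)
  · refine hp (Int.eq_zero_of_abs_lt_dvd (Rat.den_dvd_leadingCoeff_of_aeval_eq_zero hroot) ?_)
    have := hα_lt _ hdeg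
    have := hβ_lt _ hdeg
    rw [leadingCoeff, coeff_sub, coeff_toIntPoly, coeff_toIntPoly, abs_lt]
    omega

theorem IsFactorization.exists_flen_gt_of_den_le {r x : ℚ} (hr : 1 < r) {α : ℕ →₀ ℕ}
    (hα : IsFactorization r x α) {i : ℕ} (hi : 1 ≤ i) (h : r.den ≤ α i) :
    ∃ β, IsFactorization r x β ∧ flen α < flen β := by
  obtain ⟨i, rfl⟩ := Nat.exists_eq_add_of_le' hi
  refine ⟨_, hα.carry (by linarith) h, ?_⟩
  have := flen_sub_single_add_single h i r.num.natAbs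
  have := Rat.den_lt_natAbs_num hr
  omega

theorem IsFactorization.forall_lt_den_of_flen_eq_sSup {r x : ℚ} (hr : 1 < r) {α : ℕ →₀ ℕ}
    (hα : IsFactorization r x α) (hmax : flen α = sSup (lengthSet r x)) :
    ∀ i, 1 ≤ i → α i < r.den := by
  intro i hi
  by_contra! h
  obtain ⟨β, hβ, hlt⟩ := hα.exists_flen_gt_of_den_le hr hi h
  exact (hmax ▸ hlt).not_ge (le_csSup (lengthSet_finite hr.le x).bddAbove ⟨β, hβ, rfl⟩)

theorem stmt16_general (r : ℚ) (h1 : 1 < r)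
    (x : ℚ)
    (α : ℕ →₀ ℕ) (hα : IsFactorization r x α) :
    (lengthSet r x).Finite ∧
    (flen α = sSup (lengthSet r x) ↔ ∀ i : ℕ, 1 ≤ i → α i < r.den) ∧
    ∃! β : ℕ →₀ ℕ, IsFactorization r x β ∧ flen β = sSup (lengthSet r x) := by
  have hfin := lengthSet_finite h1.le x
  obtain ⟨γ, hγ, hγmax⟩ := Nat.sSup_mem (s := lengthSet r x) ⟨_, α, hα, rfl⟩ hfin.bddAbove
  have hγ_lt := hγ.forall_lt_den_of_flen_eq_sSup h1 hγmax
  refine ⟨hfin, ⟨hα.forall_lt_den_of_flen_eq_sSup h1, fun hα_lt => ?_⟩, γ, ⟨hγ, hγmax⟩, ?_⟩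
  · rw [hα.eq_of_forall_lt_den hγ hα_lt hγ_lt, hγmax]
  · rintro β ⟨hβ, hβmax⟩
    exact hβ.eq_of_forall_lt_den hγ (hβ.forall_lt_den_of_flen_eq_sSup h1 hβmax) hγ_lt

theorem stmt16 (r : ℚ) (h1 : 1 < r) (hd : r.den ≠ 1)
    (x : ℚ) (hx : x ∈ S r) (hx0 : x ≠ 0)
    (α : ℕ →₀ ℕ) (hα : IsFactorization r x α) :
    (lengthSet r x).Finite ∧
    (flen α = sSup (lengthSet r x) ↔ ∀ i : ℕ, 1 ≤ i → α i < r.den) ∧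
    ∃! β : ℕ →₀ ℕ, IsFactorization r x β ∧ flen β = sSup (lengthSet r x) :=
  stmt16_general r h1 x α hα
end

section
/- Let r ∈ ℚ with r > 1. Then for every k ∈ ℕ₀, the element d(r)·r^k − 1 belongs to S_r; that is, 1 divides d(r)·r^k in S_r. -/
open Finsupp
open scoped ENNReal

lemma natCast_mul_pow_mem_S (r : ℚ) (m n : ℕ) : (m : ℚ) * r ^ n ∈ S r := by
  rw [← nsmul_eq_mul]
  exact nsmul_mem (AddSubmonoid.subset_closure (s := {x | ∃ n : ℕ, x = r ^ n}) ⟨n, rfl⟩) m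

lemma exists_natCast_eq_num_sub_den {r : ℚ} (hr : 1 ≤ r) : ∃ m : ℕ, (m : ℚ) = r.num - r.den := by
  have hden_le : (r.den : ℚ) ≤ r.num := by
    rw [← Rat.den_mul_eq_num]
    exact le_mul_of_one_le_right (Nat.cast_nonneg _) hr
  obtain ⟨m, hm⟩ := Int.eq_ofNat_of_zero_le (sub_nonneg.mpr (mod_cast hden_le : (r.den : ℤ) ≤ r.num))
  exact ⟨m, mod_cast hm.symm⟩

lemma den_mul_pow_succ_sub_one (r : ℚ) (k : ℕ) :
    (r.den : ℚ) * r ^ (k + 1) - 1 = (r.num - r.den) * r ^ k + ((r.den : ℚ) * r ^ k - 1) := by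
  rw [← Rat.den_mul_eq_num]
  ring

theorem stmt17 (r : ℚ) (h1 : 1 < r) (k : ℕ) :
    (r.den : ℚ) * r ^ k - 1 ∈ S r := by
  obtain ⟨m, hm⟩ := exists_natCast_eq_num_sub_den h1.le
  induction k with
  | zero => simpa [Nat.cast_pred r.pos] using natCast_mul_pow_mem_S r (r.den - 1) 0
  | succ k ih =>
    rw [den_mul_pow_succ_sub_one, ← hm]
    exact add_mem (natCast_mul_pow_mem_S r m k) ih
end
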